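/- arXiv:1610.03538 — 9 statements merged into one kernel-verified Lean document; each statement's English description precedes it below -/
import Mathlib

section
/- Cramér–Rao bound on a finite sample space: Let Ω be a finite set and for each ε ∈ ℝ let p(·|ε) : Ω → ℝ be a probability distribution (p(x|ε) ≥ 0 and ∑_{x∈Ω} p(x|ε) = 1), such that for every x ∈ Ω the map ε ↦ p(x|ε) is differentiable at ε₀. Let ε̂ : Ω → ℝ be an estimator that is locally unbiased, i.e. ∑_{x∈Ω} ε̂(x) p(x|ε) = ε for all ε in a neighborhood of ε₀. Define the Fisher information F(ε₀) := ∑_{x : p(x|ε₀) > 0} (∂_ε p(x|ε₀))² / p(x|ε₀) and assume F(ε₀) > 0. Then the mean squared error of the estimator satisfies ∑_{x∈Ω} (ε̂(x) − ε₀)² p(x|ε₀) ≥ 1 / F(ε₀). -/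
/-!
Differentiating the normalisation `∑ p = 1` and the unbiasedness `∑ ε̂ p = ε` at `ε₀` gives
`∑ (ε̂ x - ε₀) ∂p(x) = 1`. Outcomes with `p(x|ε₀) = 0` are minima of `ε ↦ p(x|ε)`, so their
score `∂p(x)` vanishes; writing each remaining term as `((ε̂ x - ε₀) √p) · (∂p / √p)`,
Cauchy–Schwarz bounds `1` by the mean squared error times the Fisher information.
-/

open Filter Topology Finset

theorem HasDerivAt.eq_zero_of_nonneg_of_eq_zero {f : ℝ → ℝ} {f' a : ℝ}
    (hf : HasDerivAt f f' a) (hnonneg : ∀ x, 0 ≤ f x) (hzero : f a = 0) : f' = 0 :=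
  IsLocalMin.hasDerivAt_eq_zero (Eventually.of_forall fun x => hzero ▸ hnonneg x) hf

theorem sum_mul_deriv_eq_of_eventuallyEq {ι : Type*} (s : Finset ι) (c : ι → ℝ)
    {p : ℝ → ι → ℝ} {dp : ι → ℝ} {g : ℝ → ℝ} {g' ε₀ : ℝ}
    (hp : ∀ i ∈ s, HasDerivAt (fun ε => p ε i) (dp i) ε₀) (hg : HasDerivAt g g' ε₀)
    (h : (fun ε => ∑ i ∈ s, c i * p ε i) =ᶠ[𝓝 ε₀] g) :
    ∑ i ∈ s, c i * dp i = g' :=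
  (HasDerivAt.fun_sum fun i hi => (hp i hi).const_mul (c i)).unique (hg.congr_of_eventuallyEq h)

theorem sq_sum_mul_le_sum_sq_mul_mul_sum_sq_div {ι : Type*} (s : Finset ι) (a u w : ι → ℝ)
    (hw : ∀ i ∈ s, 0 ≤ w i) (hu : ∀ i ∈ s, w i = 0 → u i = 0) :
    (∑ i ∈ s, a i * u i) ^ 2 ≤
      (∑ i ∈ s, a i ^ 2 * w i) * ∑ i ∈ s, if 0 < w i then u i ^ 2 / w i else 0 := by
  refine sum_sq_le_sum_mul_sum_of_sq_le_mul s (fun i hi => mul_nonneg (sq_nonneg _) (hw i hi))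
    (fun i _ => by split_ifs <;> positivity) fun i hi => le_of_eq ?_
  rcases (hw i hi).lt_or_eq with hpos | hzero
  · rw [if_pos hpos]
    field_simp
  · simp [hu i hi hzero.symm]

/-- Cramér–Rao bound on a finite sample space. -/
theorem cramer_rao_finite
    {Ω : Type*} [Fintype Ω]
    (p : ℝ → Ω → ℝ) (dp : Ω → ℝ) (ε₀ : ℝ) (est : Ω → ℝ)
    (hnonneg : ∀ ε x, 0 ≤ p ε x)
    (hsum : ∀ ε, ∑ x, p ε x = 1)
    (hderiv : ∀ x, HasDerivAt (fun ε => p ε x) (dp x) ε₀)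
    (hunbiased : ∀ᶠ ε in nhds ε₀, ∑ x, est x * p ε x = ε)
    (F : ℝ)
    (hF : F = ∑ x, if 0 < p ε₀ x then (dp x) ^ 2 / p ε₀ x else 0)
    (hFpos : 0 < F) :
    1 / F ≤ ∑ x, (est x - ε₀) ^ 2 * p ε₀ x := by
  have hdp_sum : ∑ x, dp x = 0 := by
    simpa using sum_mul_deriv_eq_of_eventuallyEq univ 1 (fun x _ => hderiv x)
      (hasDerivAt_const ε₀ 1) (Eventually.of_forall fun ε => by simpa using hsum ε)
  have hest_sum : ∑ x, est x * dp x = 1 :=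
    sum_mul_deriv_eq_of_eventuallyEq univ est (fun x _ => hderiv x) (hasDerivAt_id ε₀) hunbiased
  have hcentered : ∑ x, (est x - ε₀) * dp x = 1 := by
    simp only [sub_mul, sum_sub_distrib, ← mul_sum, hest_sum, hdp_sum, mul_zero, sub_zero]
  have hcs := sq_sum_mul_le_sum_sq_mul_mul_sum_sq_div univ (fun x => est x - ε₀) dp (p ε₀)
    (fun x _ => hnonneg ε₀ x)
    fun x _ => (hderiv x).eq_zero_of_nonneg_of_eq_zero (hnonneg · x)
  rw [hcentered, ← hF, one_pow] at hcs
  rw [div_le_iff₀ hFpos]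
  linarith
end

section
/- The measurement in the eigenbasis of the symmetric logarithmic derivative attains the quantum Fisher information: Let ρ, ρ', L be n×n complex matrices with ρ positive semidefinite, ρ' Hermitian, and L Hermitian satisfying the symmetric-logarithmic-derivative equation (Lρ + ρL)/2 = ρ'. Let L = ∑_x l_x P_x be a spectral decomposition of L, where the l_x are real, the P_x are Hermitian idempotents with P_x P_y = 0 for x ≠ y, ∑_x P_x = I, and L P_x = l_x P_x. Then the Fisher information of the projective measurement {P_x} equals the quantum Fisher information: ∑_{x : tr(P_x ρ) > 0} (tr(P_x ρ'))² / tr(P_x ρ) = tr(ρ L²) (all traces appearing here are real, since tr(P_x ρ) ≥ 0 and P_x, ρ' are Hermitian). -/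
/-!
Since `L = ∑ l_x P_x` with orthogonal projections, `P_x L = L P_x = l_x P_x`, so by cyclicity of
the trace the SLD equation gives `tr(P_x ρ') = l_x tr(P_x ρ)`. Each term of the classical Fisher
information is therefore `l_x² tr(P_x ρ)` (outcomes of probability zero contribute `0` on both
sides, as `tr(P_x ρ) = tr(P_x ρ P_x) ≥ 0`), and these sum to `tr(ρ L²)` because `L² = ∑ l_x² P_x`.
-/

open scoped ComplexOrder

open Matrix

section OrthogonalIdempotents

variable {R A ι : Type*} [CommSemiring R] [Semiring A] [Algebra R A] [Fintype ι]
  {P : ι → A}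

theorem OrthogonalIdempotents.mul_sum_smul (hP : OrthogonalIdempotents P) (c : ι → R) (x : ι) :
    P x * ∑ y, c y • P y = c x • P x := by
  classical
  simp [Finset.mul_sum, hP.mul_eq]

theorem OrthogonalIdempotents.sum_smul_mul (hP : OrthogonalIdempotents P) (c : ι → R) (x : ι) :
    (∑ y, c y • P y) * P x = c x • P x := by
  classical
  simp [Finset.sum_mul, hP.mul_eq, eq_comm]

theorem OrthogonalIdempotents.sum_smul_sq (hP : OrthogonalIdempotents P) (c : ι → R) :
    (∑ y, c y • P y) ^ 2 = ∑ y, c y ^ 2 • P y := by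
  simp only [sq, Finset.sum_mul, smul_mul_assoc, hP.mul_sum_smul, smul_smul]

end OrthogonalIdempotents

namespace Matrix

variable {m ι R : Type*} [Fintype m] [Fintype ι]

theorem trace_mul_sum_smul [CommSemiring R] (ρ : Matrix m m R) (c : ι → R)
    (P : ι → Matrix m m R) :
    trace (ρ * ∑ y, c y • P y) = ∑ y, c y * trace (P y * ρ) := by
  simp only [Matrix.mul_sum, trace_sum, Matrix.mul_smul, trace_smul, smul_eq_mul,
    trace_mul_comm ρ]

theorem trace_mul_anticommutator_sum_smul [DecidableEq m] [CommSemiring R] {P : ι → Matrix m m R}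
    (hP : OrthogonalIdempotents P) (c : ι → R) (ρ : Matrix m m R) (x : ι) :
    trace (P x * ((∑ y, c y • P y) * ρ + ρ * ∑ y, c y • P y)) = 2 * c x * trace (P x * ρ) := by
  have hleft : trace (P x * ((∑ y, c y • P y) * ρ)) = c x * trace (P x * ρ) := by
    rw [← Matrix.mul_assoc, hP.mul_sum_smul, Matrix.smul_mul, trace_smul, smul_eq_mul]
  have hright : trace (P x * (ρ * ∑ y, c y • P y)) = c x * trace (P x * ρ) := by
    rw [← Matrix.mul_assoc, trace_mul_cycle, hP.sum_smul_mul, Matrix.smul_mul, trace_smul,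
      smul_eq_mul]
  rw [Matrix.mul_add, trace_add, hleft, hright]
  ring

theorem PosSemidef.trace_mul_nonneg [CommRing R] [PartialOrder R] [StarRing R] [AddLeftMono R]
    {ρ P : Matrix m m R} (hρ : ρ.PosSemidef) (hP : P.IsHermitian) (hPP : IsIdempotentElem P) :
    0 ≤ trace (P * ρ) := by
  have := (hρ.mul_mul_conjTranspose_same P).trace_nonneg
  rwa [hP.eq, trace_mul_cycle, hPP.eq] at this

end Matrix

theorem ite_pos_mul_sq_div_eq (a t : ℝ) (ht : 0 ≤ t) :
    (if 0 < t then (a * t) ^ 2 / t else 0) = a ^ 2 * t := by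
  rcases ht.lt_or_eq with ht | rfl
  · rw [if_pos ht]
    field_simp
  · simp

theorem sld_measurement_attains_qfi_general
    {n : ℕ} {ι : Type*} [Fintype ι]
    (ρ ρ' L : Matrix (Fin n) (Fin n) ℂ)
    (hρ : ρ.PosSemidef)
    (hSLD : (1 / 2 : ℂ) • (L * ρ + ρ * L) = ρ')
    (l : ι → ℝ) (P : ι → Matrix (Fin n) (Fin n) ℂ)
    (hPherm : ∀ x, (P x).IsHermitian)
    (hPidem : ∀ x, P x * P x = P x)
    (hPorth : ∀ x y, x ≠ y → P x * P y = 0)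
    (hLspec : L = ∑ x, (l x : ℂ) • P x) :
    ∑ x, (if 0 < ((P x * ρ).trace).re
        then (((P x * ρ').trace).re) ^ 2 / ((P x * ρ).trace).re else 0)
      = ((ρ * L ^ 2).trace).re := by
  have hP : OrthogonalIdempotents P := ⟨hPidem, hPorth⟩
  subst hSLD hLspec
  rw [hP.sum_smul_sq, trace_mul_sum_smul, Complex.re_sum]
  refine Finset.sum_congr rfl fun x _ => ?_
  -- The ascription makes the cast `Complex.ofReal` instead of `RCLike.ofReal`, which the
  -- `Complex.ofReal_*` rewrites below need.
  obtain ⟨t, ht, hPρ⟩ : ∃ t : ℝ, 0 ≤ t ∧ (t : ℂ) = trace (P x * ρ) :=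
    RCLike.nonneg_iff_exists_ofReal.mp (hρ.trace_mul_nonneg (hPherm x) (hPidem x))
  rw [Matrix.mul_smul, trace_smul, trace_mul_anticommutator_sum_smul hP, smul_eq_mul, ← hPρ]
  have hsld : (1 / 2 * (2 * l x * t) : ℂ) = (l x * t : ℝ) := by
    push_cast
    ring
  rw [hsld, ← Complex.ofReal_pow, ← Complex.ofReal_mul]
  simp only [Complex.ofReal_re]
  exact ite_pos_mul_sq_div_eq (l x) t ht

/-- The projective measurement in the eigenbasis of the symmetric logarithmic
derivative attains the quantum Fisher information. -/
theorem sld_measurement_attains_qfi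
    {n : ℕ} {ι : Type*} [Fintype ι]
    (ρ ρ' L : Matrix (Fin n) (Fin n) ℂ)
    (hρ : ρ.PosSemidef) (hρ' : ρ'.IsHermitian) (hL : L.IsHermitian)
    (hSLD : (1 / 2 : ℂ) • (L * ρ + ρ * L) = ρ')
    (l : ι → ℝ) (P : ι → Matrix (Fin n) (Fin n) ℂ)
    (hPherm : ∀ x, (P x).IsHermitian)
    (hPidem : ∀ x, P x * P x = P x)
    (hPorth : ∀ x y, x ≠ y → P x * P y = 0)
    (hPsum : ∑ x, P x = 1)
    (hLP : ∀ x, L * P x = (l x : ℂ) • P x)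
    (hLspec : L = ∑ x, (l x : ℂ) • P x) :
    ∑ x, (if 0 < ((P x * ρ).trace).re
        then (((P x * ρ').trace).re) ^ 2 / ((P x * ρ).trace).re else 0)
      = ((ρ * L ^ 2).trace).re :=
  sld_measurement_attains_qfi_general ρ ρ' L hρ hSLD l P hPherm hPidem hPorth hLspec
end

section
/- Nonnegativity of the quantum Fisher information after loss of a reference frame (lower bound in Theorem on precision loss): Let H be a finite-dimensional complex inner product space, ψ ∈ H a unit vector, ψ' ∈ H, and (P_i)_{i∈ι} a finite family of self-adjoint idempotent operators on H with P_i P_j = 0 for i ≠ j and ∑_i P_i = id; set p_i := ⟨ψ, P_i ψ⟩. Then ∑_{i : p_i > 0} (Im⟨ψ, P_i ψ'⟩)² / p_i ≤ ‖ψ'‖²; equivalently, Bob's quantum Fisher information H_B := 4‖ψ'‖² − 4 ∑_{i : p_i > 0} (Im⟨ψ, P_i ψ'⟩)² / p_i satisfies H_B ≥ 0. -/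
/-! Since `P_i` is an orthogonal projection, `⟨ψ, P_i ψ'⟩ = ⟨P_i ψ, P_i ψ'⟩` and `p_i = ‖P_i ψ‖²`, so by
Cauchy–Schwarz the `i`-th term is at most `‖P_i ψ'‖²`; by completeness these sum to `‖ψ'‖²`. -/

open scoped InnerProductSpace
open RCLike Finset

section

variable {𝕜 E : Type*} [RCLike 𝕜] [NormedAddCommGroup E] [InnerProductSpace 𝕜 E]

theorem sq_im_inner_div_sq_norm_le (x y : E) : im ⟪x, y⟫_𝕜 ^ 2 / ‖x‖ ^ 2 ≤ ‖y‖ ^ 2 := by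
  rcases eq_or_ne x 0 with rfl | hx
  · simp
  rw [div_le_iff₀ (by positivity)]
  calc im ⟪x, y⟫_𝕜 ^ 2 ≤ ‖⟪x, y⟫_𝕜‖ ^ 2 := by
        rw [← normSq_eq_def', sq]; exact im_sq_le_normSq _
    _ ≤ (‖x‖ * ‖y‖) ^ 2 := by gcongr; exact norm_inner_le_norm x y
    _ = ‖y‖ ^ 2 * ‖x‖ ^ 2 := by ring

variable [CompleteSpace E] {p : E →L[𝕜] E}

theorem IsStarProjection.inner_apply_right (hp : IsStarProjection p) (x y : E) :
    ⟪x, p y⟫_𝕜 = ⟪p x, p y⟫_𝕜 := by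
  calc ⟪x, p y⟫_𝕜 = ⟪x, p (p y)⟫_𝕜 := by rw [← mul_apply_eq_comp, hp.isIdempotentElem.eq]
    _ = ⟪p x, p y⟫_𝕜 := (hp.isSelfAdjoint.isSymmetric x (p y)).symm

theorem IsStarProjection.re_inner_apply_self (hp : IsStarProjection p) (x : E) :
    re ⟪x, p x⟫_𝕜 = ‖p x‖ ^ 2 := by
  rw [hp.inner_apply_right, inner_self_eq_norm_sq]

theorem sum_sq_norm_apply_of_sum_eq_one {ι : Type*} {s : Finset ι} {P : ι → E →L[𝕜] E}
    (hP : ∀ i ∈ s, IsStarProjection (P i)) (hsum : ∑ i ∈ s, P i = 1) (x : E) :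
    ∑ i ∈ s, ‖P i x‖ ^ 2 = ‖x‖ ^ 2 := by
  calc ∑ i ∈ s, ‖P i x‖ ^ 2 = re ⟪x, ∑ i ∈ s, P i x⟫_𝕜 := by
        rw [inner_sum, map_sum]
        exact sum_congr rfl fun i hi => ((hP i hi).re_inner_apply_self x).symm
    _ = ‖x‖ ^ 2 := by
        rw [← _root_.sum_apply, hsum, one_apply_eq_self, inner_self_eq_norm_sq]

end

theorem qrf_twirled_qfi_nonneg_general
    {H : Type*} [NormedAddCommGroup H] [InnerProductSpace ℂ H] [FiniteDimensional ℂ H]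
    {ι : Type*} [Fintype ι]
    (ψ ψ' : H)
    (P : ι → H →L[ℂ] H)
    (hsa : ∀ i, IsSelfAdjoint (P i))
    (hidem : ∀ i, P i * P i = P i)
    (hsum : ∑ i, P i = 1) :
    ∑ i, (if 0 < ((inner ℂ ψ (P i ψ) : ℂ)).re
        then ((inner ℂ ψ (P i ψ') : ℂ)).im ^ 2 / ((inner ℂ ψ (P i ψ) : ℂ)).re else 0)
      ≤ ‖ψ'‖ ^ 2 := by
  have hP (i : ι) : IsStarProjection (P i) := ⟨hidem i, hsa i⟩
  calc _ ≤ ∑ i, ‖P i ψ'‖ ^ 2 := by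
        refine sum_le_sum fun i _ => ?_
        rw [← RCLike.re_to_complex, ← RCLike.im_to_complex, (hP i).re_inner_apply_self,
          (hP i).inner_apply_right]
        split_ifs
        · exact sq_im_inner_div_sq_norm_le _ _
        · positivity
    _ = ‖ψ'‖ ^ 2 := sum_sq_norm_apply_of_sum_eq_one (fun i _ => hP i) hsum ψ'

/-- Nonnegativity of the quantum Fisher information after loss of a common
reference frame: the twirled QFI
`H_B = 4‖ψ'‖² − 4 ∑_{i : p_i > 0} (Im⟨ψ, P_i ψ'⟩)² / p_i` is nonnegative,
stated as the equivalent inequality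
`∑_{i : p_i > 0} (Im⟨ψ, P_i ψ'⟩)² / p_i ≤ ‖ψ'‖²`. -/
theorem qrf_twirled_qfi_nonneg
    {H : Type*} [NormedAddCommGroup H] [InnerProductSpace ℂ H] [FiniteDimensional ℂ H]
    {ι : Type*} [Fintype ι]
    (ψ ψ' : H) (hψ : ‖ψ‖ = 1)
    (P : ι → H →L[ℂ] H)
    (hsa : ∀ i, IsSelfAdjoint (P i))
    (hidem : ∀ i, P i * P i = P i)
    (horth : ∀ i j, i ≠ j → P i * P j = 0)
    (hsum : ∑ i, P i = 1) :
    ∑ i, (if 0 < ((inner ℂ ψ (P i ψ) : ℂ)).re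
        then ((inner ℂ ψ (P i ψ') : ℂ)).im ^ 2 / ((inner ℂ ψ (P i ψ) : ℂ)).re else 0)
      ≤ ‖ψ'‖ ^ 2 :=
  qrf_twirled_qfi_nonneg_general ψ ψ' P hsa hidem hsum
end

section
/- The quantum Fisher information decreases under loss of a reference frame (upper bound in Theorem on precision loss): Let H be a finite-dimensional complex inner product space, ψ ∈ H a unit vector, ψ' ∈ H with Re⟨ψ, ψ'⟩ = 0, and (P_i)_{i∈ι} a finite family of self-adjoint idempotent operators on H with P_i P_j = 0 for i ≠ j and ∑_i P_i = id; set p_i := ⟨ψ, P_i ψ⟩. Then |⟨ψ, ψ'⟩|² ≤ ∑_{i : p_i > 0} (Im⟨ψ, P_i ψ'⟩)² / p_i; equivalently, Bob's quantum Fisher information H_B := 4‖ψ'‖² − 4 ∑_{i : p_i > 0} (Im⟨ψ, P_i ψ'⟩)² / p_i does not exceed Alice's quantum Fisher information H_A := 4(‖ψ'‖² − |⟨ψ, ψ'⟩|²). -/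
/-!
Write `p i = ⟨ψ, P i ψ⟩ = ‖P i ψ‖²` and `a i = Im⟨ψ, P i ψ'⟩`. Completeness of the projections gives
`∑ p i = ‖ψ‖² = 1` and `∑ a i = Im⟨ψ, ψ'⟩`, which is all of `⟨ψ, ψ'⟩` because its real part vanishes.
The inequality is then Cauchy–Schwarz `(∑ a i)² ≤ (∑ p i) (∑ a i² / p i)`, where the terms with
`p i = 0` drop out since then `P i ψ = 0` and hence `a i = 0`.
-/

open Finset

theorem sq_sum_le_sum_mul_sum_sq_div {ι : Type*} (s : Finset ι) {a q : ι → ℝ}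
    (hq : ∀ i ∈ s, 0 ≤ q i) (ha : ∀ i ∈ s, q i = 0 → a i = 0) :
    (∑ i ∈ s, a i) ^ 2 ≤ (∑ i ∈ s, q i) * ∑ i ∈ s, a i ^ 2 / q i := by
  refine sum_sq_le_sum_mul_sum_of_sq_le_mul s hq (fun i hi => div_nonneg (sq_nonneg _) (hq i hi))
    fun i hi => ?_
  rcases eq_or_ne (q i) 0 with h | h
  · simp [h, ha i hi h]
  · rw [mul_div_cancel₀ _ h]

theorem ite_pos_div_eq_div {x q : ℝ} (hq : 0 ≤ q) : (if 0 < q then x / q else 0) = x / q := by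
  split_ifs with h
  · rfl
  · rw [le_antisymm (not_lt.1 h) hq, div_zero]

section Projection

variable {𝕜 E : Type*} [RCLike 𝕜] [NormedAddCommGroup E] [InnerProductSpace 𝕜 E]

theorem sum_inner_apply_eq_inner {ι : Type*} [Fintype ι] {P : ι → E →L[𝕜] E}
    (hsum : ∑ i, P i = 1) (x y : E) : ∑ i, inner 𝕜 x (P i y) = inner 𝕜 x y := by
  rw [← inner_sum, ← _root_.sum_apply, hsum, one_apply_eq_self]

variable [CompleteSpace E]

theorem IsStarProjection.inner_apply_self_eq_norm_sq {P : E →L[𝕜] E} (hP : IsStarProjection P)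
    (x : E) : inner 𝕜 x (P x) = (‖P x‖ : 𝕜) ^ 2 := by
  have hsymm : inner 𝕜 (P x) (P x) = inner 𝕜 x (P (P x)) := hP.isSelfAdjoint.isSymmetric x (P x)
  rw [← inner_self_eq_norm_sq_to_K, hsymm, ← mul_apply_eq_comp, hP.isIdempotentElem.eq]

theorem IsStarProjection.inner_apply_eq_zero {P : E →L[𝕜] E} (hP : IsStarProjection P)
    {x : E} (hx : P x = 0) (y : E) : inner 𝕜 x (P y) = 0 := by
  have hsymm : inner 𝕜 (P x) y = inner 𝕜 x (P y) := hP.isSelfAdjoint.isSymmetric x y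
  rw [← hsymm, hx, inner_zero_left]

end Projection

theorem qrf_twirled_qfi_le_qfi_general
    {H : Type*} [NormedAddCommGroup H] [InnerProductSpace ℂ H] [FiniteDimensional ℂ H]
    {ι : Type*} [Fintype ι]
    (ψ ψ' : H) (hψ : ‖ψ‖ = 1)
    (hre : ((inner ℂ ψ ψ' : ℂ)).re = 0)
    (P : ι → H →L[ℂ] H)
    (hsa : ∀ i, IsSelfAdjoint (P i))
    (hidem : ∀ i, P i * P i = P i)
    (hsum : ∑ i, P i = 1) :
    ‖(inner ℂ ψ ψ' : ℂ)‖ ^ 2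
      ≤ ∑ i, (if 0 < ((inner ℂ ψ (P i ψ) : ℂ)).re
          then ((inner ℂ ψ (P i ψ') : ℂ)).im ^ 2 / ((inner ℂ ψ (P i ψ) : ℂ)).re else 0) := by
  set p : ι → ℝ := fun i => (inner ℂ ψ (P i ψ)).re
  set a : ι → ℝ := fun i => (inner ℂ ψ (P i ψ')).im
  have hP (i : ι) : IsStarProjection (P i) := ⟨hidem i, hsa i⟩
  have hp (i : ι) : p i = ‖P i ψ‖ ^ 2 := by
    simp only [p, (hP i).inner_apply_self_eq_norm_sq]
    norm_cast
  have hp_sum : ∑ i, p i = 1 := by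
    rw [← Complex.re_sum, sum_inner_apply_eq_inner hsum, inner_self_eq_norm_sq_to_K, hψ]
    norm_num
  have ha_sum : ∑ i, a i = (inner ℂ ψ ψ').im := by
    rw [← Complex.im_sum, sum_inner_apply_eq_inner hsum]
  have ha (i : ι) (hpi : p i = 0) : a i = 0 := by
    have hPψ : P i ψ = 0 := by rwa [hp, sq_eq_zero_iff, norm_eq_zero] at hpi
    simp only [a, (hP i).inner_apply_eq_zero hPψ, Complex.zero_im]
  calc ‖inner ℂ ψ ψ'‖ ^ 2 = (∑ i, a i) ^ 2 := by
        rw [ha_sum, Complex.sq_norm, Complex.normSq_apply, hre]; ring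
    _ ≤ (∑ i, p i) * ∑ i, a i ^ 2 / p i :=
        sq_sum_le_sum_mul_sum_sq_div _ (fun i _ => hp i ▸ sq_nonneg _) fun i _ => ha i
    _ = _ := by
        rw [hp_sum, one_mul]
        exact sum_congr rfl fun i _ => (ite_pos_div_eq_div (hp i ▸ sq_nonneg _)).symm

/-- The quantum Fisher information decreases under loss of a reference frame:
`|⟨ψ, ψ'⟩|² ≤ ∑_{i : p_i > 0} (Im⟨ψ, P_i ψ'⟩)² / p_i`, equivalently Bob's QFI
`H_B = 4‖ψ'‖² − 4 ∑_{i : p_i > 0} (Im⟨ψ, P_i ψ'⟩)²/p_i` does not exceed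
Alice's QFI `H_A = 4(‖ψ'‖² − |⟨ψ, ψ'⟩|²)`. -/
theorem qrf_twirled_qfi_le_qfi
    {H : Type*} [NormedAddCommGroup H] [InnerProductSpace ℂ H] [FiniteDimensional ℂ H]
    {ι : Type*} [Fintype ι]
    (ψ ψ' : H) (hψ : ‖ψ‖ = 1)
    (hre : ((inner ℂ ψ ψ' : ℂ)).re = 0)
    (P : ι → H →L[ℂ] H)
    (hsa : ∀ i, IsSelfAdjoint (P i))
    (hidem : ∀ i, P i * P i = P i)
    (horth : ∀ i j, i ≠ j → P i * P j = 0)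
    (hsum : ∑ i, P i = 1) :
    ‖(inner ℂ ψ ψ' : ℂ)‖ ^ 2
      ≤ ∑ i, (if 0 < ((inner ℂ ψ (P i ψ) : ℂ)).re
          then ((inner ℂ ψ (P i ψ') : ℂ)).im ^ 2 / ((inner ℂ ψ (P i ψ) : ℂ)).re else 0) :=
  qrf_twirled_qfi_le_qfi_general ψ ψ' hψ hre P hsa hidem hsum
end

section
/- No-loss condition under unitary encoding: Let H be a finite-dimensional complex inner product space, ψ ∈ H a unit vector, K a self-adjoint operator on H, and (P_i)_{i∈ι} a finite family of self-adjoint idempotent operators on H with P_i P_j = 0 for i ≠ j and ∑_i P_i = id; set p_i := ⟨ψ, P_i ψ⟩. Then Bob's quantum Fisher information H_B(K) := 4‖Kψ‖² − 4 ∑_{i : p_i > 0} (Re⟨ψ, P_i K ψ⟩)² / p_i equals Alice's quantum Fisher information 4 Var_ψ(K) := 4(⟨ψ, K²ψ⟩ − ⟨ψ, Kψ⟩²) if and only if Cov_ψ(P_i, K) = 0 for every i, where Cov_ψ(P_i, K) := ½⟨ψ, (P_i K + K P_i)ψ⟩ − p_i ⟨ψ, Kψ⟩. -/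
/-!
Write `p i = ⟪ψ, P i ψ⟫`, `a i = Re ⟪ψ, P i K ψ⟫` and `k = Re ⟪ψ, K ψ⟫`. Since the `P i` are
orthogonal projections summing to the identity, `p` is a probability vector, `∑ a i = k`, and
`a i = 0` wherever `p i = 0`; moreover `Cov_ψ(P i, K) = a i - p i * k` and `‖K ψ‖² = ⟪ψ, K² ψ⟫`.
The gap between the two Fisher informations is then `4 ∑_{p i > 0} (a i - p i * k)² / p i`,
a sum of nonnegative terms, which vanishes exactly when every covariance does.
-/

open scoped InnerProductSpace

section WeightedSquares

variable {ι : Type*} [Fintype ι] {p a : ι → ℝ} {k : ℝ}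

theorem sum_ite_sq_sub_mul_div (hp : ∀ i, 0 ≤ p i) (ha : ∀ i, p i = 0 → a i = 0)
    (hp1 : ∑ i, p i = 1) (hak : ∑ i, a i = k) :
    ∑ i, (if 0 < p i then (a i - p i * k) ^ 2 / p i else 0)
      = ∑ i, (if 0 < p i then a i ^ 2 / p i else 0) - k ^ 2 := by
  have hterm : ∀ i, (if 0 < p i then (a i - p i * k) ^ 2 / p i else 0)
      = (if 0 < p i then a i ^ 2 / p i else 0) - 2 * k * a i + k ^ 2 * p i := by
    intro i
    by_cases hpos : 0 < p i
    · simp only [if_pos hpos]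
      field_simp
      ring
    · have hzero : p i = 0 := le_antisymm (not_lt.mp hpos) (hp i)
      simp [hzero, ha i hzero]
  rw [Finset.sum_congr rfl fun i _ => hterm i, Finset.sum_add_distrib, Finset.sum_sub_distrib,
    ← Finset.mul_sum, ← Finset.mul_sum, hak, hp1]
  ring

theorem sum_ite_sq_div_eq_sq_iff (hp : ∀ i, 0 ≤ p i) (ha : ∀ i, p i = 0 → a i = 0)
    (hp1 : ∑ i, p i = 1) (hak : ∑ i, a i = k) :
    ∑ i, (if 0 < p i then a i ^ 2 / p i else 0) = k ^ 2 ↔ ∀ i, a i = p i * k := by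
  rw [← sub_eq_zero, ← sum_ite_sq_sub_mul_div hp ha hp1 hak,
    Finset.sum_eq_zero_iff_of_nonneg fun i _ => by split_ifs <;> positivity]
  refine forall_congr' fun i => ?_
  by_cases hpos : 0 < p i
  · simp [hpos, hpos.ne', sub_eq_zero]
  · have hzero : p i = 0 := le_antisymm (not_lt.mp hpos) (hp i)
    simp [hzero, ha i hzero]

end WeightedSquares

section Operators

variable {𝕜 E : Type*} [RCLike 𝕜] [NormedAddCommGroup E] [InnerProductSpace 𝕜 E]

theorem inner_sum_apply_of_sum_eq_one {ι : Type*} [Fintype ι] {P : ι → E →L[𝕜] E}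
    (hsum : ∑ i, P i = 1) (x y : E) : ∑ i, ⟪x, P i y⟫_𝕜 = ⟪x, y⟫_𝕜 := by
  rw [← inner_sum, ← sum_apply, hsum, one_apply_eq_self]

variable [CompleteSpace E]

theorem IsSelfAdjoint.norm_apply_sq {A : E →L[𝕜] E} (hA : IsSelfAdjoint A) (x : E) :
    ‖A x‖ ^ 2 = RCLike.re ⟪x, A (A x)⟫_𝕜 := by
  rw [A.apply_norm_sq_eq_inner_adjoint_right, ← ContinuousLinearMap.star_eq_adjoint, hA.star_eq]
  rfl

theorem IsSelfAdjoint.re_inner_apply_apply_comm {A B : E →L[𝕜] E} (hA : IsSelfAdjoint A)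
    (hB : IsSelfAdjoint B) (x : E) :
    RCLike.re ⟪x, A (B x)⟫_𝕜 = RCLike.re ⟪x, B (A x)⟫_𝕜 := by
  calc RCLike.re ⟪x, A (B x)⟫_𝕜 = RCLike.re ⟪A x, B x⟫_𝕜 :=
        congrArg _ (hA.isSymmetric x (B x)).symm
    _ = RCLike.re ⟪B x, A x⟫_𝕜 := by rw [← inner_conj_symm, RCLike.conj_re]
    _ = RCLike.re ⟪x, B (A x)⟫_𝕜 := congrArg _ (hB.isSymmetric x (A x))

theorem IsStarProjection.norm_apply_sq {P : E →L[𝕜] E} (hP : IsStarProjection P) (x : E) :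
    ‖P x‖ ^ 2 = RCLike.re ⟪x, P x⟫_𝕜 := by
  rw [hP.isSelfAdjoint.norm_apply_sq, ← mul_apply_eq_comp, hP.isIdempotentElem.eq]

theorem IsStarProjection.inner_apply_eq_zero_of_re_inner_apply_self {P : E →L[𝕜] E}
    (hP : IsStarProjection P) {x : E} (hx : RCLike.re ⟪x, P x⟫_𝕜 = 0) (y : E) :
    ⟪x, P y⟫_𝕜 = 0 := by
  have hPx : P x = 0 := by simpa [← hP.norm_apply_sq] using hx
  calc ⟪x, P y⟫_𝕜 = ⟪P x, y⟫_𝕜 := (hP.isSelfAdjoint.isSymmetric x y).symm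
    _ = 0 := by rw [hPx, inner_zero_left]

end Operators

theorem qrf_no_loss_unitary_iff_general
    {H : Type*} [NormedAddCommGroup H] [InnerProductSpace ℂ H] [FiniteDimensional ℂ H]
    {ι : Type*} [Fintype ι]
    (ψ : H) (hψ : ‖ψ‖ = 1)
    (K : H →L[ℂ] H) (hK : IsSelfAdjoint K)
    (P : ι → H →L[ℂ] H)
    (hsa : ∀ i, IsSelfAdjoint (P i))
    (hidem : ∀ i, P i * P i = P i)
    (hsum : ∑ i, P i = 1) :
    (4 * ‖K ψ‖ ^ 2
        - 4 * ∑ i, (if 0 < ((inner ℂ ψ (P i ψ) : ℂ)).re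
            then ((inner ℂ ψ (P i (K ψ)) : ℂ)).re ^ 2 / ((inner ℂ ψ (P i ψ) : ℂ)).re else 0)
      = 4 * (((inner ℂ ψ (K (K ψ)) : ℂ)).re - (((inner ℂ ψ (K ψ) : ℂ)).re) ^ 2))
    ↔ ∀ i, ((inner ℂ ψ (P i (K ψ)) : ℂ) + (inner ℂ ψ (K (P i ψ)) : ℂ)).re / 2
        - ((inner ℂ ψ (P i ψ) : ℂ)).re * ((inner ℂ ψ (K ψ) : ℂ)).re = 0 := by
  have hproj : ∀ i, IsStarProjection (P i) := fun i => ⟨hidem i, hsa i⟩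
  have hp : ∀ i, 0 ≤ (⟪ψ, P i ψ⟫_ℂ).re := fun i => by
    rw [← RCLike.re_to_complex, ← (hproj i).norm_apply_sq]; positivity
  have ha : ∀ i, (⟪ψ, P i ψ⟫_ℂ).re = 0 → (⟪ψ, P i (K ψ)⟫_ℂ).re = 0 := fun i h => by
    rw [(hproj i).inner_apply_eq_zero_of_re_inner_apply_self h, Complex.zero_re]
  have hp1 : ∑ i, (⟪ψ, P i ψ⟫_ℂ).re = 1 := by
    rw [← Complex.re_sum, inner_sum_apply_of_sum_eq_one hsum, inner_self_eq_norm_sq_to_K, hψ]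
    simp
  have hak : ∑ i, (⟪ψ, P i (K ψ)⟫_ℂ).re = (⟪ψ, K ψ⟫_ℂ).re := by
    rw [← Complex.re_sum, inner_sum_apply_of_sum_eq_one hsum]
  have key := sum_ite_sq_div_eq_sq_iff hp ha hp1 hak
  have hKP : ∀ i, (⟪ψ, K (P i ψ)⟫_ℂ).re = (⟪ψ, P i (K ψ)⟫_ℂ).re :=
    fun i => hK.re_inner_apply_apply_comm (hsa i) ψ
  simp only [Complex.add_re, hKP, hK.norm_apply_sq ψ, RCLike.re_to_complex]
  constructor
  · intro h i
    linarith [key.1 (by linarith) i]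
  · intro h
    linarith [key.2 fun i => by linarith [h i]]

/-- No-loss condition under unitary encoding: Bob's quantum Fisher information
equals `4 Var_ψ(K)` if and only if `Cov_ψ(P_i, K) = 0` for every `i`. -/
theorem qrf_no_loss_unitary_iff
    {H : Type*} [NormedAddCommGroup H] [InnerProductSpace ℂ H] [FiniteDimensional ℂ H]
    {ι : Type*} [Fintype ι]
    (ψ : H) (hψ : ‖ψ‖ = 1)
    (K : H →L[ℂ] H) (hK : IsSelfAdjoint K)
    (P : ι → H →L[ℂ] H)
    (hsa : ∀ i, IsSelfAdjoint (P i))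
    (hidem : ∀ i, P i * P i = P i)
    (horth : ∀ i j, i ≠ j → P i * P j = 0)
    (hsum : ∑ i, P i = 1) :
    (4 * ‖K ψ‖ ^ 2
        - 4 * ∑ i, (if 0 < ((inner ℂ ψ (P i ψ) : ℂ)).re
            then ((inner ℂ ψ (P i (K ψ)) : ℂ)).re ^ 2 / ((inner ℂ ψ (P i ψ) : ℂ)).re else 0)
      = 4 * (((inner ℂ ψ (K (K ψ)) : ℂ)).re - (((inner ℂ ψ (K ψ) : ℂ)).re) ^ 2))
    ↔ ∀ i, ((inner ℂ ψ (P i (K ψ)) : ℂ) + (inner ℂ ψ (K (P i ψ)) : ℂ)).re / 2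
        - ((inner ℂ ψ (P i ψ) : ℂ)).re * ((inner ℂ ψ (K ψ) : ℂ)).re = 0 :=
  qrf_no_loss_unitary_iff_general ψ hψ K hK P hsa hidem hsum
end

section
/- Non-degenerate commuting noise destroys all information about the parameter: Let H be a finite-dimensional complex inner product space with orthonormal basis (e_i)_{i∈ι}, and let P_i be the orthogonal projection onto the line ℂ·e_i (so each P_i has rank 1, the P_i are pairwise orthogonal, and ∑_i P_i = id). Let K be a self-adjoint operator on H commuting with every P_i (equivalently, K commutes with a generator G having non-degenerate spectrum whose spectral projections are the P_i; equivalently, K e_i = k_i e_i with k_i ∈ ℝ). Then for every unit vector ψ ∈ H, Bob's quantum Fisher information vanishes: H_B(K) := 4‖Kψ‖² − 4 ∑_{i : p_i > 0} (Re⟨ψ, P_i K ψ⟩)² / p_i = 0, where p_i := ⟨ψ, P_i ψ⟩; i.e. the parameter ε of the encoding ψ_ε = e^{−iKε}ψ cannot be estimated after twirling. -/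
/-! Every `e i` is an eigenvector of `K`: it spans the range of `P i`, which `K` preserves. As `K`
is self-adjoint the eigenvalue `κ i` is real, so with `c i := ⟪e i, ψ⟫` we get `p i = |c i|²`,
`Re ⟪ψ, P i (K ψ)⟫ = κ i |c i|²` and, by Parseval, `‖K ψ‖² = ∑ κ i² |c i|²`. Each summand of the
subtracted sum is then `κ i² |c i|⁴ / |c i|² = κ i² |c i|²` (or `0` when `c i = 0`). -/

open scoped InnerProductSpace
open RCLike

section RankOne

variable {H : Type*} [NormedAddCommGroup H] [InnerProductSpace ℂ H]

lemma apply_eq_inner_smul_of_commute_rankOne {u : H} (hu : ‖u‖ = 1) {P K : H →L[ℂ] H}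
    (hP : ∀ v, P v = ⟪u, v⟫_ℂ • u) (hcomm : K * P = P * K) :
    K u = ⟪u, K u⟫_ℂ • u := by
  have hPu : P u = u := by simp [hP, inner_self_eq_norm_sq_to_K, hu]
  calc K u = (K * P) u := by rw [mul_apply_eq_comp, hPu]
    _ = ⟪u, K u⟫_ℂ • u := by rw [hcomm, mul_apply_eq_comp, hP]

lemma re_inner_ofReal_mul_inner_smul (r : ℝ) (u ψ : H) :
    (⟪ψ, ((r : ℂ) * ⟪u, ψ⟫_ℂ) • u⟫_ℂ).re = r * ‖⟪u, ψ⟫_ℂ‖ ^ 2 := by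
  rw [inner_smul_right, ← inner_conj_symm ψ u, mul_assoc, Complex.mul_conj,
    Complex.normSq_eq_norm_sq, ← Complex.ofReal_mul, Complex.ofReal_re]

end RankOne

lemma ite_pos_mul_sq_div_self (a : ℝ) {p : ℝ} (hp : 0 ≤ p) :
    (if 0 < p then (a * p) ^ 2 / p else 0) = a ^ 2 * p := by
  split_ifs with h
  · field_simp
  · simp [le_antisymm (not_lt.mp h) hp]

/-- Non-degenerate commuting noise destroys all information about the
parameter: if each `P_i` is the rank-one orthogonal projection onto the line
spanned by the orthonormal-basis vector `e i`, and the self-adjoint encoding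
generator `K` commutes with every `P_i`, then Bob's quantum Fisher information
vanishes for every unit vector `ψ`. -/
theorem qrf_nondegenerate_commuting_noise
    {H : Type*} [NormedAddCommGroup H] [InnerProductSpace ℂ H] [FiniteDimensional ℂ H]
    {ι : Type*} [Fintype ι]
    (e : OrthonormalBasis ι ℂ H)
    (P : ι → H →L[ℂ] H)
    (hP : ∀ i v, P i v = (inner ℂ (e i) v : ℂ) • e i)
    (K : H →L[ℂ] H) (hK : IsSelfAdjoint K)
    (hcomm : ∀ i, K * P i = P i * K) :
    ∀ ψ : H, ‖ψ‖ = 1 →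
      4 * ‖K ψ‖ ^ 2
          - 4 * ∑ i, (if 0 < ((inner ℂ ψ (P i ψ) : ℂ)).re
              then ((inner ℂ ψ (P i (K ψ)) : ℂ)).re ^ 2 / ((inner ℂ ψ (P i ψ) : ℂ)).re else 0)
        = 0 := by
  intro ψ _
  set κ : ι → ℝ := fun i => re ⟪e i, K (e i)⟫_ℂ
  have hKe : ∀ i, K (e i) = (κ i : ℂ) • e i := fun i => by
    rw [apply_eq_inner_smul_of_commute_rankOne (e.norm_eq_one i) (hP i) (hcomm i)]
    exact congrArg (· • e i) (hK.isSymmetric.coe_re_inner_self_apply (e i)).symm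
  have hKψ : ∀ i, ⟪e i, K ψ⟫_ℂ = κ i * ⟪e i, ψ⟫_ℂ := fun i => by
    rw [← ContinuousLinearMap.adjoint_inner_left, hK.adjoint_eq, hKe, inner_smul_left,
      Complex.conj_ofReal]
  have hp : ∀ i, (⟪ψ, P i ψ⟫_ℂ).re = ‖⟪e i, ψ⟫_ℂ‖ ^ 2 := fun i => by
    have h := re_inner_ofReal_mul_inner_smul 1 (e i) ψ
    rwa [Complex.ofReal_one, one_mul, one_mul, ← hP] at h
  have hq : ∀ i, (⟪ψ, P i (K ψ)⟫_ℂ).re = κ i * ‖⟪e i, ψ⟫_ℂ‖ ^ 2 := fun i => by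
    rw [hP, hKψ, re_inner_ofReal_mul_inner_smul]
  have hnorm : ‖K ψ‖ ^ 2 = ∑ i, κ i ^ 2 * ‖⟪e i, ψ⟫_ℂ‖ ^ 2 := by
    simp [← e.sum_sq_norm_inner_right (K ψ), hKψ, mul_pow]
  simp only [hp, hq, ite_pos_mul_sq_div_self _ (sq_nonneg _), hnorm, sub_self]
end

section
/- Symmetric logarithmic derivative of the twirled pure state: Let H be a finite-dimensional complex inner product space, ψ ∈ H a unit vector, ψ' ∈ H, and (P_i)_{i∈ι} a finite family of self-adjoint idempotent operators on H with P_i P_j = 0 for i ≠ j and ∑_i P_i = id; set p_i := ⟨ψ, P_i ψ⟩. Define ρ_B := ∑_i P_i |ψ⟩⟨ψ| P_i, and for each i with p_i > 0 set ψ_i := P_i ψ / √p_i and φ_i := (2 P_i ψ' − ⟨ψ_i, ψ'⟩ ψ_i) / √p_i, and define L := ∑_{i : p_i > 0} (|φ_i⟩⟨ψ_i| + |ψ_i⟩⟨φ_i|). Then L solves the symmetric-logarithmic-derivative equation for the twirled family: ½(L ρ_B + ρ_B L) = ∑_i P_i (|ψ'⟩⟨ψ| + |ψ⟩⟨ψ'|)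 P_i. -/
/-!
With `qᵢ = Pᵢ ψ` and `eᵢ = Pᵢ ψ'`, both `ρ_B = ∑ᵢ |qᵢ⟩⟨qᵢ|` and `L` are block diagonal for the
decomposition `H = ⨁ᵢ range Pᵢ`, so `L ρ_B + ρ_B L` splits into blocks as well. On the `i`-th block
the equation is the SLD equation of the (unnormalised) pure state `|qᵢ⟩⟨qᵢ|` with derivative
`|eᵢ⟩⟨qᵢ| + |qᵢ⟩⟨eᵢ|`: the correction term in `φᵢ` makes `⟪qᵢ, φᵢ⟫ = ⟪qᵢ, eᵢ⟫ / ‖qᵢ‖`, and the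
resulting multiples of `|qᵢ⟩⟨qᵢ|` cancel.
-/
open scoped InnerProductSpace
open InnerProductSpace ContinuousLinearMap

theorem Fintype.sum_mul_sum_eq_sum_of_orthogonal {R ι : Type*} [NonUnitalSemiring R] [Fintype ι]
    {p A B : ι → R} (hp : ∀ i j, i ≠ j → p i * p j = 0) (hA : ∀ i, A i * p i = A i)
    (hB : ∀ i, p i * B i = B i) :
    (∑ i, A i) * (∑ i, B i) = ∑ i, A i * B i := by
  classical
  rw [Fintype.sum_mul_sum]
  refine Finset.sum_congr rfl fun i _ => Finset.sum_eq_single i (fun j _ hji => ?_) (by simp)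
  rw [← hA i, ← hB j, mul_assoc, ← mul_assoc (p i), hp i j hji.symm, zero_mul, mul_zero]

section RankOne

variable {𝕜 E : Type*} [RCLike 𝕜] [NormedAddCommGroup E] [InnerProductSpace 𝕜 E]

theorem mul_rankOne_of_apply_eq {P : E →L[𝕜] E} {a : E} (ha : P a = a) (b : E) :
    P * rankOne 𝕜 a b = rankOne 𝕜 a b := by
  rw [mul_def, comp_rankOne, ha]

theorem rankOne_mul_of_apply_eq [CompleteSpace E] {P : E →L[𝕜] E} (hP : IsSelfAdjoint P) (a : E)
    {b : E} (hb : P b = b) : rankOne 𝕜 a b * P = rankOne 𝕜 a b := by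
  rw [mul_def, rankOne_comp, hP.adjoint_eq, hb]

theorem re_inner_apply_self_eq_norm_sq [CompleteSpace E] {P : E →L[𝕜] E} (hsa : IsSelfAdjoint P)
    (hidem : P * P = P) (x : E) : RCLike.re ⟪x, P x⟫_𝕜 = ‖P x‖ ^ 2 := by
  calc RCLike.re ⟪x, P x⟫_𝕜 = RCLike.re ⟪x, P (P x)⟫_𝕜 := by rw [← mul_apply_eq_comp, hidem]
    _ = RCLike.re ⟪P x, P x⟫_𝕜 := congrArg _ (hsa.isSymmetric x (P x)).symm
    _ = ‖P x‖ ^ 2 := inner_self_eq_norm_sq _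

theorem rankOne_sld_equation {q e u f : E} (hu : u = (‖q‖ : 𝕜)⁻¹ • q)
    (hf : f = (‖q‖ : 𝕜)⁻¹ • ((2 : 𝕜) • e - ⟪u, e⟫_𝕜 • u)) :
    (1 / 2 : 𝕜) • ((rankOne 𝕜 f u + rankOne 𝕜 u f) * rankOne 𝕜 q q
        + rankOne 𝕜 q q * (rankOne 𝕜 f u + rankOne 𝕜 u f))
      = rankOne 𝕜 e q + rankOne 𝕜 q e := by
  subst hu hf
  rcases eq_or_ne q 0 with rfl | hq
  · simp
  have hn : (‖q‖ : 𝕜) ≠ 0 := by simpa using hq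
  ext w
  simp only [mul_def, add_comp, comp_add, rankOne_comp_rankOne]
  simp only [one_div, inner_smul_left, map_inv₀, RCLike.conj_ofReal, inner_self_eq_norm_sq_to_K,
    map_smul, map_sub, smul_apply, sub_apply, inner_sub_left, map_ofNat, map_mul, inner_conj_symm,
    inner_smul_right, inner_sub_right, map_smulₛₗ, smul_add, add_apply, rankOne_apply]
  match_scalars
  · field_simp
  · field_simp
    ring

end RankOne

theorem qrf_sld_of_twirled_state_general
    {H : Type*} [NormedAddCommGroup H] [InnerProductSpace ℂ H] [FiniteDimensional ℂ H]
    {ι : Type*} [Fintype ι]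
    (ψ ψ' : H)
    (P : ι → H →L[ℂ] H)
    (hsa : ∀ i, IsSelfAdjoint (P i))
    (hidem : ∀ i, P i * P i = P i)
    (horth : ∀ i j, i ≠ j → P i * P j = 0)
    (ψi φi : ι → H)
    (hψi : ∀ i, ψi i = ((Real.sqrt (((inner ℂ ψ (P i ψ) : ℂ)).re) : ℂ))⁻¹ • P i ψ)
    (hφi : ∀ i, φi i = ((Real.sqrt (((inner ℂ ψ (P i ψ) : ℂ)).re) : ℂ))⁻¹ •
        ((2 : ℂ) • P i ψ' - (inner ℂ (ψi i) ψ' : ℂ) • ψi i))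
    (ρB L : H →L[ℂ] H)
    (hρB : ∀ v, ρB v = ∑ i, (inner ℂ ψ (P i v) : ℂ) • P i ψ)
    (hL : ∀ v, L v = ∑ i, (if 0 < ((inner ℂ ψ (P i ψ) : ℂ)).re
        then (inner ℂ (ψi i) v : ℂ) • φi i + (inner ℂ (φi i) v : ℂ) • ψi i
        else 0)) :
    ∀ v, (1 / 2 : ℂ) • (L (ρB v) + ρB (L v))
      = ∑ i, ((inner ℂ ψ (P i v) : ℂ) • P i ψ' + (inner ℂ ψ' (P i v) : ℂ) • P i ψ) := by
  have hPP : ∀ i x, P i (P i x) = P i x := fun i x => by rw [← mul_apply_eq_comp, hidem]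
  have hadj : ∀ i x y, ⟪P i x, y⟫_ℂ = ⟪x, P i y⟫_ℂ := fun i => (hsa i).isSymmetric
  have hsqrt : ∀ i, Real.sqrt (⟪ψ, P i ψ⟫_ℂ).re = ‖P i ψ‖ := fun i => by
    rw [← RCLike.re_to_complex, re_inner_apply_self_eq_norm_sq (hsa i) (hidem i),
      Real.sqrt_sq (norm_nonneg _)]
  have hψP : ∀ i, P i (ψi i) = ψi i := by simp [hψi, hPP]
  have hφP : ∀ i, P i (φi i) = φi i := by simp [hφi, hψP, hPP]
  have hρB_sum : ρB = ∑ i, rankOne ℂ (P i ψ) (P i ψ) := by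
    ext v; simp [hρB, hadj]
  have hL_sum : L = ∑ i, (rankOne ℂ (φi i) (ψi i) + rankOne ℂ (ψi i) (φi i)) := by
    ext v
    rw [hL, sum_apply]
    refine Finset.sum_congr rfl fun i _ => ?_
    split_ifs with hp
    · simp
    · -- `(√0)⁻¹ = 0`, so `ψi i = φi i = 0` when `pᵢ = 0`
      have h0 : Real.sqrt (⟪ψ, P i ψ⟫_ℂ).re = 0 := Real.sqrt_eq_zero'.mpr (not_lt.mp hp)
      simp [hφi, hψi, h0]
  have hblock := fun i => rankOne_sld_equation (𝕜 := ℂ) (q := P i ψ) (e := P i ψ')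
    (u := ψi i) (f := φi i)
    (by rw [hψi, hsqrt]; rfl) (by rw [hφi, hsqrt, ← hψP, hadj, hψP]; rfl)
  have hsld : (1 / 2 : ℂ) • (L * ρB + ρB * L)
      = ∑ i, (rankOne ℂ (P i ψ') (P i ψ) + rankOne ℂ (P i ψ) (P i ψ')) := by
    rw [hL_sum, hρB_sum, Fintype.sum_mul_sum_eq_sum_of_orthogonal horth ?_ ?_,
      Fintype.sum_mul_sum_eq_sum_of_orthogonal horth ?_ ?_, ← Finset.sum_add_distrib,
      Finset.smul_sum]
    · exact Finset.sum_congr rfl fun i _ => hblock i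
    all_goals
      intro i
      simp [add_mul, mul_add, mul_rankOne_of_apply_eq, rankOne_mul_of_apply_eq, hsa, hψP, hφP, hPP]
  intro v
  simpa [hadj] using congr($hsld v)

/-- The operator `L = ∑_{i : p_i > 0} (|φ_i⟩⟨ψ_i| + |ψ_i⟩⟨φ_i|)`, with
`ψ_i = P_i ψ / √p_i` and `φ_i = (2 P_i ψ' − ⟨ψ_i, ψ'⟩ ψ_i)/√p_i`, solves the
symmetric-logarithmic-derivative equation for the twirled pure-state family:
`½(L ρ_B + ρ_B L) = ∑ᵢ Pᵢ (|ψ'⟩⟨ψ| + |ψ⟩⟨ψ'|) Pᵢ`, where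
`ρ_B = ∑ᵢ Pᵢ |ψ⟩⟨ψ| Pᵢ`. -/
theorem qrf_sld_of_twirled_state
    {H : Type*} [NormedAddCommGroup H] [InnerProductSpace ℂ H] [FiniteDimensional ℂ H]
    {ι : Type*} [Fintype ι]
    (ψ ψ' : H) (hψ : ‖ψ‖ = 1)
    (P : ι → H →L[ℂ] H)
    (hsa : ∀ i, IsSelfAdjoint (P i))
    (hidem : ∀ i, P i * P i = P i)
    (horth : ∀ i j, i ≠ j → P i * P j = 0)
    (hsum : ∑ i, P i = 1)
    (ψi φi : ι → H)
    (hψi : ∀ i, ψi i = ((Real.sqrt (((inner ℂ ψ (P i ψ) : ℂ)).re) : ℂ))⁻¹ • P i ψ)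
    (hφi : ∀ i, φi i = ((Real.sqrt (((inner ℂ ψ (P i ψ) : ℂ)).re) : ℂ))⁻¹ •
        ((2 : ℂ) • P i ψ' - (inner ℂ (ψi i) ψ' : ℂ) • ψi i))
    (ρB L : H →L[ℂ] H)
    (hρB : ∀ v, ρB v = ∑ i, (inner ℂ ψ (P i v) : ℂ) • P i ψ)
    (hL : ∀ v, L v = ∑ i, (if 0 < ((inner ℂ ψ (P i ψ) : ℂ)).re
        then (inner ℂ (ψi i) v : ℂ) • φi i + (inner ℂ (φi i) v : ℂ) • ψi i
        else 0)) :
    ∀ v, (1 / 2 : ℂ) • (L (ρB v) + ρB (L v))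
      = ∑ i, ((inner ℂ ψ (P i v) : ℂ) • P i ψ' + (inner ℂ ψ' (P i v) : ℂ) • P i ψ) :=
  qrf_sld_of_twirled_state_general ψ ψ' P hsa hidem horth ψi φi hψi hφi ρB L hρB hL
end

section
/- Bound on the remainder of the limit formula for the quantum Fisher information of Gaussian states: Let K be the 2N×2N block matrix [[I, 0], [0, −I]], let S be a 2N×2N complex matrix with S K S† = K, let D be the real diagonal 2N×2N matrix diag(λ₁, …, λ_N, λ₁, …, λ_N) with all λ_k ≥ λ_min for some λ_min > 1, and set σ := S D S† and A := K σ (so σ = S D S† is a Williamson decomposition of a covariance matrix). Let V and W be Hermitian 2N×2N matrices and set V̇ := K V and Ẇ := K W. Then A is invertible, the numbers tr[(A V̇)²] and tr[(A Ẇ)²] are nonnegative reals, for every n ≥ 1 one has |tr(A^{−n} V̇ A^{−n} Ẇ)| ≤ √(tr[(A V̇)²]) · √(tr[(A Ẇ)²]) · λ_min^{−2n−2}, and consequently for every M ≥ 0 the series R_M := ½ ∑_{n=M+1}^{∞} tr(A^{−n} V̇ A^{−n} Ẇ) converges absolutely with |R_M| ≤ √(tr[(A V̇)²]) · √(tr[(A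 Ẇ)²]) / (2 λ_min^{2M+2} (λ_min² − 1)). -/
/-!
Write `K = diag κ` with `κᵢ = ±1`. Symplecticity `S K S† = K` says that `T = K S` has inverse
`K S†`, and then `A = K S D S† = T (D K) T⁻¹` is diagonalised by `T` with eigenvalues `±λᵢ`.
Conjugating by `T`, every trace in the statement becomes `tr (diag f * H_V * diag f * H_W)` for
the Hermitian matrices `H_Z = S† K Z K S`: `tr[(A V̇)²] = ∑ λᵢ λⱼ |(H_V)ᵢⱼ|²`, while the `n`-th
term of the series has `|fᵢ| = λᵢ⁻ⁿ ≤ λ_min^(-n-1) λᵢ`. A weighted Cauchy–Schwarz inequality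
gives the termwise bound, and a geometric series with ratio `λ_min⁻²` bounds the remainder.
-/

open Matrix Finset

theorem Real.sum_mul_mul_le_sqrt_mul_sqrt {ι : Type*} (s : Finset ι) {w : ι → ℝ}
    (hw : ∀ i ∈ s, 0 ≤ w i) (a b : ι → ℝ) :
    ∑ i ∈ s, w i * (a i * b i)
      ≤ √(∑ i ∈ s, w i * a i ^ 2) * √(∑ i ∈ s, w i * b i ^ 2) := by
  rw [← Real.sqrt_mul (sum_nonneg fun i hi => mul_nonneg (hw i hi) (sq_nonneg _))]
  refine Real.le_sqrt_of_sq_le (sum_sq_le_sum_mul_sum_of_sq_le_mul s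
    (fun i hi => mul_nonneg (hw i hi) (sq_nonneg _))
    (fun i hi => mul_nonneg (hw i hi) (sq_nonneg _)) fun i _ => le_of_eq ?_)
  ring

theorem inv_pow_le_inv_pow_succ_mul {c x : ℝ} (hc : 0 < c) (hx : c ≤ x) (m : ℕ) :
    x⁻¹ ^ m ≤ c⁻¹ ^ (m + 1) * x := by
  have hx0 : 0 < x := hc.trans_le hx
  calc x⁻¹ ^ m = x / x ^ (m + 1) := by
        rw [pow_succ', ← div_div, div_self hx0.ne', one_div, inv_pow]
    _ ≤ x / c ^ (m + 1) := by gcongr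
    _ = c⁻¹ ^ (m + 1) * x := by rw [inv_pow]; ring

namespace Matrix

variable {n : Type*} [Fintype n]

theorem trace_conj_mul_conj_mul {α : Type*} [CommSemiring α] (T U P X Y : Matrix n n α) :
    trace (T * P * U * X * (T * P * U) * Y) = trace (P * (U * X * T) * P * (U * Y * T)) := by
  rw [show T * P * U * X * (T * P * U) * Y = T * (P * (U * X * T) * P * (U * Y)) by
      simp only [mul_assoc], trace_mul_comm]
  simp only [mul_assoc]

variable [DecidableEq n]

theorem trace_diagonal_mul_diagonal_mul {α : Type*} [CommSemiring α] (f g : n → α)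
    (P Q : Matrix n n α) :
    trace (diagonal f * P * diagonal g * Q) = ∑ i, ∑ j, f i * P i j * g j * Q j i := by
  simp only [trace, diag_apply, mul_apply (M := diagonal f * P * diagonal g), mul_diagonal,
    diagonal_mul]

theorem norm_trace_diagonal_mul_diagonal_mul_le {𝕜 : Type*} [NormedField 𝕜]
    (f g : n → 𝕜) (P Q : Matrix n n 𝕜) :
    ‖trace (diagonal f * P * diagonal g * Q)‖
      ≤ ∑ i, ∑ j, ‖f i‖ * ‖g j‖ * (‖P i j‖ * ‖Q j i‖) := by
  rw [trace_diagonal_mul_diagonal_mul]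
  refine (norm_sum_le _ _).trans (sum_le_sum fun i _ => (norm_sum_le _ _).trans ?_)
  refine sum_le_sum fun j _ => le_of_eq ?_
  rw [norm_mul, norm_mul, norm_mul]
  ring

theorem trace_diagonal_mul_diagonal_mul_of_isHermitian {𝕜 : Type*} [RCLike 𝕜] (d : n → ℝ)
    {H : Matrix n n 𝕜} (hH : H.IsHermitian) :
    trace (diagonal (fun i => (d i : 𝕜)) * H * diagonal (fun i => (d i : 𝕜)) * H)
      = ((∑ i, ∑ j, d i * d j * ‖H i j‖ ^ 2 : ℝ) : 𝕜) := by
  rw [trace_diagonal_mul_diagonal_mul]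
  push_cast
  refine sum_congr rfl fun i _ => sum_congr rfl fun j _ => ?_
  rw [← hH.apply j i, RCLike.star_def, mul_right_comm _ (H i j), mul_assoc, RCLike.mul_conj]

theorem norm_trace_diagonal_mul_diagonal_mul_le_of_isHermitian {𝕜 : Type*} [RCLike 𝕜] {c : ℝ}
    (hc : 0 < c) {d : n → ℝ} (hd : ∀ i, c ≤ d i) (m : ℕ) {f : n → 𝕜}
    (hf : ∀ i, ‖f i‖ = (d i)⁻¹ ^ m) (H : Matrix n n 𝕜) {G : Matrix n n 𝕜}
    (hG : G.IsHermitian) :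
    ‖trace (diagonal f * H * diagonal f * G)‖
      ≤ √(∑ i, ∑ j, d i * d j * ‖H i j‖ ^ 2) * √(∑ i, ∑ j, d i * d j * ‖G i j‖ ^ 2)
        * (c ^ (2 * m + 2))⁻¹ := by
  have hd0 : ∀ i, 0 ≤ d i := fun i => hc.le.trans (hd i)
  have hff : ∀ i j, ‖f i‖ * ‖f j‖ ≤ (c ^ (2 * m + 2))⁻¹ * (d i * d j) := fun i j => by
    calc ‖f i‖ * ‖f j‖ ≤ (c⁻¹ ^ (m + 1) * d i) * (c⁻¹ ^ (m + 1) * d j) := by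
          rw [hf, hf]
          exact mul_le_mul (inv_pow_le_inv_pow_succ_mul hc (hd i) m)
            (inv_pow_le_inv_pow_succ_mul hc (hd j) m) (pow_nonneg (inv_nonneg.mpr (hd0 j)) m)
            (mul_nonneg (by positivity) (hd0 i))
      _ = (c ^ (2 * m + 2))⁻¹ * (d i * d j) := by
          rw [← inv_pow, show 2 * m + 2 = (m + 1) + (m + 1) by ring, pow_add]; ring
  have hcs := Real.sum_mul_mul_le_sqrt_mul_sqrt univ (w := fun p : n × n => d p.1 * d p.2)
    (fun p _ => mul_nonneg (hd0 _) (hd0 _)) (fun p => ‖H p.1 p.2‖) (fun p => ‖G p.1 p.2‖)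
  simp only [Fintype.sum_prod_type] at hcs
  calc ‖trace (diagonal f * H * diagonal f * G)‖
      ≤ ∑ i, ∑ j, ‖f i‖ * ‖f j‖ * (‖H i j‖ * ‖G j i‖) :=
        norm_trace_diagonal_mul_diagonal_mul_le f f H G
    _ ≤ ∑ i, ∑ j, (c ^ (2 * m + 2))⁻¹ * (d i * d j) * (‖H i j‖ * ‖G i j‖) := by
        refine sum_le_sum fun i _ => sum_le_sum fun j _ => ?_
        rw [← hG.apply i j, norm_star]
        exact mul_le_mul_of_nonneg_right (hff i j) (by positivity)
    _ = (c ^ (2 * m + 2))⁻¹ * ∑ i, ∑ j, d i * d j * (‖H i j‖ * ‖G i j‖) := by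
        simp only [mul_sum, mul_assoc]
    _ ≤ _ := by rw [mul_comm]; gcongr

theorem trace_sq_mul_eq_trace_mul_conj {α : Type*} [CommSemiring α] (K S D R V : Matrix n n α) :
    trace ((K * (S * D * R) * (K * V)) ^ 2)
      = trace (D * (R * (K * V * K) * S) * D * (R * (K * V * K) * S)) := by
  rw [sq, show K * (S * D * R) * (K * V) * (K * (S * D * R) * (K * V))
      = K * S * (D * (R * (K * V * K) * S) * D * (R * (K * V))) by simp only [mul_assoc],
    trace_mul_comm]
  simp only [mul_assoc]

theorem isUnit_conj_diagonal_and_inv_pow {α : Type*} [Field α] {T U : Matrix n n α}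
    (hTU : T * U = 1) {e : n → α} (he : ∀ i, e i ≠ 0) :
    IsUnit (T * diagonal e * U)
      ∧ ∀ m : ℕ, (T * diagonal e * U)⁻¹ ^ m = T * diagonal (fun i => (e i)⁻¹ ^ m) * U := by
  have hUT : U * T = 1 := mul_eq_one_comm.mp hTU
  have hinv : T * diagonal e * U * (T * diagonal (fun i => (e i)⁻¹) * U) = 1 := by
    rw [show T * diagonal e * U * (T * diagonal (fun i => (e i)⁻¹) * U)
        = T * (diagonal e * (U * T) * diagonal (fun i => (e i)⁻¹)) * U by simp only [mul_assoc],
      hUT, mul_one, diagonal_mul_diagonal]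
    simp only [mul_inv_cancel₀ (he _), diagonal_one, mul_one, hTU]
  refine ⟨IsUnit.of_mul_eq_one _ hinv, fun m => ?_⟩
  rw [inv_eq_right_inv hinv]
  simpa only [Units.val_mk, Units.inv_mk, diagonal_pow, Pi.pow_def] using
    Units.conj_pow ⟨T, U, hTU, hUT⟩ (diagonal fun i => (e i)⁻¹) m

end Matrix

theorem summable_norm_and_norm_tsum_le_of_norm_le_inv_pow {E : Type*} [NormedAddCommGroup E]
    [CompleteSpace E] {a : ℕ → E} {C c : ℝ} (hc : 1 < c)
    (ha : ∀ n, 1 ≤ n → ‖a n‖ ≤ C * (c ^ (2 * n + 2))⁻¹) (M : ℕ) :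
    Summable (fun k => ‖a (M + 1 + k)‖)
      ∧ ‖∑' k, a (M + 1 + k)‖ ≤ C / (c ^ (2 * M + 2) * (c ^ 2 - 1)) := by
  set r : ℝ := (c ^ 2)⁻¹
  have hc2 : 1 < c ^ 2 := one_lt_pow₀ hc two_ne_zero
  have hr0 : 0 ≤ r := by positivity
  have hr1 : r < 1 := inv_lt_one_of_one_lt₀ hc2
  have hbound : ∀ k, ‖a (M + 1 + k)‖ ≤ C * (c ^ (2 * M + 4))⁻¹ * r ^ k := fun k => by
    refine (ha _ (by omega)).trans_eq ?_
    rw [show 2 * (M + 1 + k) + 2 = 2 * M + 4 + 2 * k by ring, pow_add, pow_mul, mul_inv, inv_pow]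
    ring
  have hgeo := (summable_geometric_of_lt_one hr0 hr1).mul_left (C * (c ^ (2 * M + 4))⁻¹)
  have hsum := Summable.of_nonneg_of_le (fun _ => norm_nonneg _) hbound hgeo
  refine ⟨hsum, ?_⟩
  calc ‖∑' k, a (M + 1 + k)‖ ≤ ∑' k, ‖a (M + 1 + k)‖ := norm_tsum_le_tsum_norm hsum
    _ ≤ ∑' k, C * (c ^ (2 * M + 4))⁻¹ * r ^ k := hsum.tsum_le_tsum hbound hgeo
    _ = C / (c ^ (2 * M + 2) * (c ^ 2 - 1)) := by
        rw [tsum_mul_left, tsum_geometric_of_lt_one hr0 hr1]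
        have : c ^ 2 - 1 ≠ 0 := (sub_pos.mpr hc2).ne'
        simp only [r]
        field_simp
        ring

theorem Matrix.fromBlocks_one_zero_zero_neg_one {m m' 𝕜 : Type*} [DecidableEq m] [DecidableEq m']
    [RCLike 𝕜] :
    (fromBlocks 1 0 0 (-1) : Matrix (m ⊕ m') (m ⊕ m') 𝕜)
      = diagonal (fun i => ((Sum.elim (fun _ => 1) (fun _ => -1) i : ℝ) : 𝕜)) := by
  rw [← diagonal_one, ← diagonal_one, diagonal_neg, fromBlocks_diagonal]
  congr with (i | i) <;> simp

section Williamson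

variable {n 𝕜 : Type*} [Fintype n] [DecidableEq n] [RCLike 𝕜] {κ d : n → ℝ}
  {K S A : Matrix n n 𝕜}

theorem isHermitian_conjTranspose_mul_signature_mul (hK : K = diagonal (fun i => (κ i : 𝕜)))
    (S : Matrix n n 𝕜) {Z : Matrix n n 𝕜} (hZ : Z.IsHermitian) :
    (Sᴴ * (K * Z * K) * S).IsHermitian := by
  have hKH : Kᴴ = K := by
    rw [hK, diagonal_conjTranspose]
    congr with i
    simp
  refine isHermitian_conjTranspose_mul_mul S ?_
  simpa only [hKH] using isHermitian_mul_mul_conjTranspose K hZ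

theorem trace_williamson_mul_sq (hK : K = diagonal (fun i => (κ i : 𝕜)))
    (hA : A = K * (S * diagonal (fun i => (d i : 𝕜)) * Sᴴ)) {Z : Matrix n n 𝕜}
    (hZ : Z.IsHermitian) :
    trace ((A * (K * Z)) ^ 2)
      = ((∑ i, ∑ j, d i * d j * ‖(Sᴴ * (K * Z * K) * S) i j‖ ^ 2 : ℝ) : 𝕜) := by
  rw [hA, trace_sq_mul_eq_trace_mul_conj]
  exact trace_diagonal_mul_diagonal_mul_of_isHermitian d
    (isHermitian_conjTranspose_mul_signature_mul hK S hZ)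

theorem re_trace_williamson_mul_sq_nonneg_and_im_eq_zero
    (hK : K = diagonal (fun i => (κ i : 𝕜))) (hd : ∀ i, 0 ≤ d i)
    (hA : A = K * (S * diagonal (fun i => (d i : 𝕜)) * Sᴴ)) {Z : Matrix n n 𝕜}
    (hZ : Z.IsHermitian) :
    0 ≤ RCLike.re (trace ((A * (K * Z)) ^ 2)) ∧ RCLike.im (trace ((A * (K * Z)) ^ 2)) = 0 := by
  rw [trace_williamson_mul_sq hK hA hZ, RCLike.ofReal_re, RCLike.ofReal_im]
  exact ⟨sum_nonneg fun i _ => sum_nonneg fun j _ =>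
    mul_nonneg (mul_nonneg (hd i) (hd j)) (sq_nonneg _), rfl⟩

theorem signature_mul_self (hκ : ∀ i, |κ i| = 1) (hK : K = diagonal (fun i => (κ i : 𝕜))) :
    K * K = 1 := by
  rw [hK, diagonal_mul_diagonal, ← diagonal_one]
  congr with i
  norm_cast
  rw [← abs_mul_abs_self, hκ, one_mul]

theorem williamson_eq_conj_diagonal (hκ : ∀ i, |κ i| = 1)
    (hK : K = diagonal (fun i => (κ i : 𝕜))) (hS : S * K * Sᴴ = K)
    (hA : A = K * (S * diagonal (fun i => (d i : 𝕜)) * Sᴴ)) :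
    K * S * (K * Sᴴ) = 1 ∧ A = K * S * diagonal (fun i => ((d i * κ i : ℝ) : 𝕜)) * (K * Sᴴ) := by
  have hKK := signature_mul_self hκ hK
  have hDK : diagonal (fun i => (d i : 𝕜)) * K = diagonal (fun i => ((d i * κ i : ℝ) : 𝕜)) := by
    rw [hK, diagonal_mul_diagonal]
    push_cast
    rfl
  constructor
  · calc K * S * (K * Sᴴ) = K * (S * K * Sᴴ) := by simp only [mul_assoc]
      _ = 1 := by rw [hS, hKK]
  · rw [hA, ← hDK]
    calc K * (S * diagonal (fun i => (d i : 𝕜)) * Sᴴ)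
        = K * S * diagonal (fun i => (d i : 𝕜)) * (K * K) * Sᴴ := by
          rw [hKK, mul_one]; simp only [mul_assoc]
      _ = _ := by simp only [mul_assoc]

theorem isUnit_and_trace_williamson_inv_pow_mul (hκ : ∀ i, |κ i| = 1)
    (hK : K = diagonal (fun i => (κ i : 𝕜))) (hS : S * K * Sᴴ = K) (hd : ∀ i, d i ≠ 0)
    (hA : A = K * (S * diagonal (fun i => (d i : 𝕜)) * Sᴴ)) (V W : Matrix n n 𝕜) :
    IsUnit A ∧ ∀ m : ℕ, trace (A⁻¹ ^ m * (K * V) * A⁻¹ ^ m * (K * W))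
      = trace (diagonal (fun i => (((d i * κ i)⁻¹ ^ m * κ i : ℝ) : 𝕜)) * (Sᴴ * (K * V * K) * S)
          * diagonal (fun i => (((d i * κ i)⁻¹ ^ m * κ i : ℝ) : 𝕜)) * (Sᴴ * (K * W * K) * S)) := by
  obtain ⟨hTU, hAconj⟩ := williamson_eq_conj_diagonal hκ hK hS hA
  have he : ∀ i, ((d i * κ i : ℝ) : 𝕜) ≠ 0 := fun i => by
    have : κ i ≠ 0 := fun h => by simpa [h] using hκ i
    exact_mod_cast mul_ne_zero (hd i) this
  obtain ⟨hunit, hpow⟩ := isUnit_conj_diagonal_and_inv_pow hTU he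
  refine ⟨hAconj ▸ hunit, fun m => ?_⟩
  have hdiag : diagonal (fun i => ((d i * κ i : ℝ) : 𝕜)⁻¹ ^ m) * K
      = diagonal (fun i => (((d i * κ i)⁻¹ ^ m * κ i : ℝ) : 𝕜)) := by
    rw [hK, diagonal_mul_diagonal]
    push_cast
    rfl
  rw [hAconj, hpow, trace_conj_mul_conj_mul, ← hdiag]
  simp only [mul_assoc]

theorem norm_trace_williamson_inv_pow_mul_le (hκ : ∀ i, |κ i| = 1)
    (hK : K = diagonal (fun i => (κ i : 𝕜))) (hS : S * K * Sᴴ = K) {c : ℝ} (hc : 0 < c)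
    (hd : ∀ i, c ≤ d i) (hA : A = K * (S * diagonal (fun i => (d i : 𝕜)) * Sᴴ))
    {V W : Matrix n n 𝕜} (hV : V.IsHermitian) (hW : W.IsHermitian) (m : ℕ) :
    ‖trace (A⁻¹ ^ m * (K * V) * A⁻¹ ^ m * (K * W))‖
      ≤ √(RCLike.re (trace ((A * (K * V)) ^ 2))) * √(RCLike.re (trace ((A * (K * W)) ^ 2)))
        * (c ^ (2 * m + 2))⁻¹ := by
  have hd0 : ∀ i, 0 < d i := fun i => hc.trans_le (hd i)
  rw [trace_williamson_mul_sq hK hA hV, trace_williamson_mul_sq hK hA hW, RCLike.ofReal_re,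
    RCLike.ofReal_re, (isUnit_and_trace_williamson_inv_pow_mul hκ hK hS (fun i => (hd0 i).ne')
      hA V W).2 m]
  refine norm_trace_diagonal_mul_diagonal_mul_le_of_isHermitian hc hd m (fun i => ?_) _
    (isHermitian_conjTranspose_mul_signature_mul hK S hW)
  simp [hκ, abs_of_pos (hd0 i)]

end Williamson

/-- Bound on the remainder of the limit formula for the quantum Fisher
information of Gaussian states: with `σ = S D S†` a Williamson decomposition
(`S` complex-form symplectic, `D = diag(λ₁,…,λ_N,λ₁,…,λ_N)`, all `λ_k ≥ λ_min > 1`)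
and `A = K σ`, for Hermitian `V`, `W` (derivatives of the covariance matrix,
with `V̇ = K V`, `Ẇ = K W`): `A` is invertible, `tr[(A V̇)²]` and `tr[(A Ẇ)²]`
are nonnegative reals, each term of the series satisfies
`|tr(A⁻ⁿ V̇ A⁻ⁿ Ẇ)| ≤ √tr[(A V̇)²] √tr[(A Ẇ)²] / λ_min^(2n+2)`, and for every `M`
the remainder `R_M = ½ ∑_{n>M} tr(A⁻ⁿ V̇ A⁻ⁿ Ẇ)` converges absolutely with
`|R_M| ≤ √tr[(A V̇)²] √tr[(A Ẇ)²] / (2 λ_min^(2M+2) (λ_min² − 1))`. -/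
theorem gaussian_qfi_remainder_bound
    {N : ℕ}
    (S V W : Matrix (Fin N ⊕ Fin N) (Fin N ⊕ Fin N) ℂ)
    (lam : Fin N → ℝ) (lamMin : ℝ)
    (hlamMin : 1 < lamMin) (hlam : ∀ k, lamMin ≤ lam k)
    (K D σ A : Matrix (Fin N ⊕ Fin N) (Fin N ⊕ Fin N) ℂ)
    (hK : K = Matrix.fromBlocks 1 0 0 (-1))
    (hD : D = Matrix.diagonal (Sum.elim (fun k => (lam k : ℂ)) fun k => (lam k : ℂ)))
    (hS : S * K * S.conjTranspose = K)
    (hσ : σ = S * D * S.conjTranspose)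
    (hA : A = K * σ)
    (hV : V.IsHermitian) (hW : W.IsHermitian) :
    IsUnit A ∧
    (0 ≤ (((A * (K * V)) ^ 2).trace).re ∧ (((A * (K * V)) ^ 2).trace).im = 0) ∧
    (0 ≤ (((A * (K * W)) ^ 2).trace).re ∧ (((A * (K * W)) ^ 2).trace).im = 0) ∧
    (∀ n : ℕ, 1 ≤ n →
      ‖(A⁻¹ ^ n * (K * V) * A⁻¹ ^ n * (K * W)).trace‖
        ≤ Real.sqrt ((((A * (K * V)) ^ 2).trace).re)
            * Real.sqrt ((((A * (K * W)) ^ 2).trace).re)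
            * (lamMin ^ (2 * n + 2))⁻¹) ∧
    ∀ M : ℕ,
      Summable (fun n : ℕ =>
        ‖(A⁻¹ ^ (M + 1 + n) * (K * V) * A⁻¹ ^ (M + 1 + n) * (K * W)).trace‖) ∧
      ‖(1 / 2 : ℂ) * ∑' n : ℕ,
          (A⁻¹ ^ (M + 1 + n) * (K * V) * A⁻¹ ^ (M + 1 + n) * (K * W)).trace‖
        ≤ Real.sqrt ((((A * (K * V)) ^ 2).trace).re)
            * Real.sqrt ((((A * (K * W)) ^ 2).trace).re)
            / (2 * lamMin ^ (2 * M + 2) * (lamMin ^ 2 - 1)) := by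
  set d : Fin N ⊕ Fin N → ℝ := Sum.elim lam lam
  set κ : Fin N ⊕ Fin N → ℝ := Sum.elim (fun _ => 1) (fun _ => -1)
  have hκ : ∀ i, |κ i| = 1 := by rintro (i | i) <;> simp [κ]
  have hd : ∀ i, lamMin ≤ d i := by rintro (i | i) <;> exact hlam i
  have hc : 0 < lamMin := zero_lt_one.trans hlamMin
  have hd0 : ∀ i, 0 ≤ d i := fun i => hc.le.trans (hd i)
  rw [fromBlocks_one_zero_zero_neg_one] at hK
  have hA' : A = K * (S * diagonal (fun i => (d i : ℂ)) * Sᴴ) := by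
    rw [hA, hσ, hD]
    congr with (i | i) <;> rfl
  have hterm := norm_trace_williamson_inv_pow_mul_le hκ hK hS hc hd hA' hV hW
  refine ⟨(isUnit_and_trace_williamson_inv_pow_mul hκ hK hS (fun i => (hc.trans_le (hd i)).ne')
      hA' V W).1, re_trace_williamson_mul_sq_nonneg_and_im_eq_zero hK hd0 hA' hV,
    re_trace_williamson_mul_sq_nonneg_and_im_eq_zero hK hd0 hA' hW, fun n _ => hterm n,
    fun M => ?_⟩
  obtain ⟨hsum, htail⟩ :=
    summable_norm_and_norm_tsum_le_of_norm_le_inv_pow hlamMin (fun n _ => hterm n) M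
  refine ⟨hsum, ?_⟩
  rw [norm_mul, show ‖(1 / 2 : ℂ)‖ = 1 / 2 by norm_num]
  calc 1 / 2 * ‖∑' k, (A⁻¹ ^ (M + 1 + k) * (K * V) * A⁻¹ ^ (M + 1 + k) * (K * W)).trace‖
      ≤ 1 / 2 * (√((((A * (K * V)) ^ 2).trace).re) * √((((A * (K * W)) ^ 2).trace).re)
          / (lamMin ^ (2 * M + 2) * (lamMin ^ 2 - 1))) := by gcongr; exact htail
    _ = _ := by field_simp
end

section
/- Blow-up of the derivative of the Gaussian quantum Fisher information at a point of purity (analytic core of the theorem that the two-variable Taylor expansion of the QFI does not exist): Let f : ℝ × ℝ → ℝ be twice continuously differentiable, let (p₀, ε₀) be a point with f(p₀, ε₀) = 1, suppose f(p, ε) ≥ 1 for all (p, ε) in some neighborhood of (p₀, ε₀) with p ≥ p₀, and assume ∂_p f(p₀, ε₀) > 0 and ∂²_{εε} f(p₀, ε₀) > 0. Define, for p > p₀ close to p₀, g(p) := (∂_ε f(p, ε₀))² / (f(p, ε₀)² − 1) (well defined since f(p, ε₀) > 1 there). Then (g(p) − ∂²_{εε} f(p₀, ε₀)) / (p − p₀)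 tends to −∞ as p → p₀ from the right; in particular the function equal to g(p) for p > p₀ and to ∂²_{εε} f(p₀, ε₀) at p = p₀ has right derivative −∞ at p₀, so no first-order Taylor expansion of the form g(p₀ + dp) = g(p₀) + c·dp + O(dp²) exists. -/
/-!
Along `ε = ε₀`, both `∂_ε f(·, ε₀)` and `f(·, ε₀)² − 1` vanish at the point of purity `p₀`: the
first because `ε₀` minimises `f(p₀, ·)`, the second because `f(p₀, ε₀) = 1`. Both are
differentiable there and the denominator has nonzero derivative `2 ∂_p f(p₀, ε₀)`, so the quotient
`g(p)` is `O(p − p₀)` and tends to `0`, not to `∂²_εε f(p₀, ε₀) > 0`. The difference quotient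
therefore behaves like `−∂²_εε f(p₀, ε₀) / (p − p₀) → −∞`.
-/

open Filter Topology

section PartialDerivative

variable {𝕜 F : Type*} [NontriviallyNormedField 𝕜] [NormedAddCommGroup F] [NormedSpace 𝕜 F]

theorem deriv_slice_snd_eq_fderiv {f : 𝕜 × 𝕜 → F} (x y : 𝕜) (hf : DifferentiableAt 𝕜 f (x, y)) :
    deriv (fun y' => f (x, y')) y = fderiv 𝕜 f (x, y) (0, 1) :=
  (hf.hasFDerivAt.comp_hasDerivAt y ((hasDerivAt_const y x).prodMk (hasDerivAt_id y))).deriv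

theorem ContDiff.differentiable_deriv_slice_snd {f : 𝕜 × 𝕜 → F} (hf : ContDiff 𝕜 2 f) (y : 𝕜) :
    Differentiable 𝕜 fun x => deriv (fun y' => f (x, y')) y := by
  have hfd : Differentiable 𝕜 f := hf.differentiable two_ne_zero
  have hf' : Differentiable 𝕜 (fderiv 𝕜 f) :=
    (hf.fderiv_right (by norm_num)).differentiable one_ne_zero
  simp only [deriv_slice_snd_eq_fderiv _ _ (hfd _)]
  fun_prop

end PartialDerivative

theorem isLocalMin_slice_snd_of_eventually_le {f : ℝ × ℝ → ℝ} {a b c : ℝ}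
    (hge : ∀ᶠ q in 𝓝 (a, b), a ≤ q.1 → c ≤ f q) (hc : f (a, b) = c) :
    IsLocalMin (fun y => f (a, y)) b := by
  have hslice : Tendsto (fun y : ℝ => (a, y)) (𝓝 b) (𝓝 (a, b)) :=
    (continuous_const.prodMk continuous_id).tendsto b
  filter_upwards [hslice.eventually hge] with y hy
  exact hc ▸ hy le_rfl

theorem tendsto_sq_div_nhdsNE_zero {𝕜 : Type*} [NontriviallyNormedField 𝕜] {u v : 𝕜 → 𝕜}
    {a v' : 𝕜} (hu : DifferentiableAt 𝕜 u a) (hu0 : u a = 0) (hv : HasDerivAt v v' a)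
    (hv' : v' ≠ 0) (hv0 : v a = 0) :
    Tendsto (fun x => u x ^ 2 / v x) (𝓝[≠] a) (𝓝 0) := by
  have hslope_u := hasDerivAt_iff_tendsto_slope.mp hu.hasDerivAt
  have hslope_v := hasDerivAt_iff_tendsto_slope.mp hv
  have hsub : Tendsto (fun x => x - a) (𝓝[≠] a) (𝓝 0) :=
    tendsto_sub_nhds_zero_iff.mpr nhdsWithin_le_nhds
  have hlim := (hslope_u.pow 2).mul (hsub.mul (hslope_v.inv₀ hv'))
  rw [zero_mul, mul_zero] at hlim
  refine hlim.congr' ?_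
  filter_upwards [self_mem_nhdsWithin] with x hx
  have hxa : x - a ≠ 0 := sub_ne_zero.mpr hx
  rw [slope_def_field, slope_def_field, hu0, hv0, sub_zero, sub_zero]
  rcases eq_or_ne (v x) 0 with hvx | hvx
  · simp [hvx]
  · field_simp

theorem tendsto_div_sub_nhdsGT_atBot {g : ℝ → ℝ} {a c : ℝ} (hg : Tendsto g (𝓝[>] a) (𝓝 c))
    (hc : c < 0) : Tendsto (fun x => g x / (x - a)) (𝓝[>] a) atBot := by
  have hinv : Tendsto (fun x : ℝ => (x - a)⁻¹) (𝓝[>] a) atTop := by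
    refine tendsto_inv_nhdsGT_zero.comp (tendsto_nhdsWithin_of_tendsto_nhds_of_eventually_within _
      (tendsto_sub_nhds_zero_iff.mpr nhdsWithin_le_nhds) ?_)
    filter_upwards [self_mem_nhdsWithin] with x hx
    exact sub_pos.mpr (Set.mem_Ioi.mp hx)
  simpa only [div_eq_mul_inv] using hg.neg_mul_atTop hc hinv

/-- Blow-up of the derivative of the Gaussian quantum Fisher information at a
point of purity: if `f` (a symplectic eigenvalue, as a function of a purity
parameter `p` and the estimated parameter `ε`) is `C²`, equals `1` at
`(p₀, ε₀)`, satisfies `f ≥ 1` near `(p₀, ε₀)` for `p ≥ p₀`, and has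
`∂_p f(p₀, ε₀) > 0` and `∂²_εε f(p₀, ε₀) > 0`, then
`(g(p) − ∂²_εε f(p₀, ε₀)) / (p − p₀) → −∞` as `p → p₀⁺`, where
`g(p) = (∂_ε f(p, ε₀))² / (f(p, ε₀)² − 1)`; hence no first-order Taylor
expansion of the QFI contribution exists at the point of purity. -/
theorem qfi_blowup_at_purity
    (f : ℝ × ℝ → ℝ) (p₀ ε₀ : ℝ)
    (hf : ContDiff ℝ 2 f)
    (h1 : f (p₀, ε₀) = 1)
    (hge : ∀ᶠ q in nhds (p₀, ε₀), p₀ ≤ q.1 → 1 ≤ f q)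
    (hp : 0 < deriv (fun p => f (p, ε₀)) p₀)
    (hεε : 0 < deriv (deriv fun ε => f (p₀, ε)) ε₀) :
    Filter.Tendsto
      (fun p => ((deriv (fun ε => f (p, ε)) ε₀) ^ 2 / ((f (p, ε₀)) ^ 2 - 1)
          - deriv (deriv fun ε => f (p₀, ε)) ε₀) / (p - p₀))
      (nhdsWithin p₀ (Set.Ioi p₀)) Filter.atBot := by
  have hu0 : deriv (fun ε => f (p₀, ε)) ε₀ = 0 :=
    (isLocalMin_slice_snd_of_eventually_le hge h1).deriv_eq_zero
  have hslice : HasDerivAt (fun p => f (p, ε₀)) (deriv (fun p => f (p, ε₀)) p₀) p₀ :=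
    (((hf.differentiable two_ne_zero).comp
      (differentiable_id.prodMk (differentiable_const ε₀))) p₀).hasDerivAt
  have hv : HasDerivAt (fun p => f (p, ε₀) ^ 2 - 1) (2 * deriv (fun p => f (p, ε₀)) p₀) p₀ := by
    simpa [h1] using (hslice.pow 2).sub_const 1
  have hg : Tendsto (fun p => deriv (fun ε => f (p, ε)) ε₀ ^ 2 / (f (p, ε₀) ^ 2 - 1))
      (𝓝[>] p₀) (𝓝 0) :=
    (tendsto_sq_div_nhdsNE_zero (hf.differentiable_deriv_slice_snd ε₀ p₀) hu0 hv (by positivity)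
      (by simp [h1])).mono_left (nhdsWithin_mono _ fun _ hx => ne_of_gt hx)
  exact tendsto_div_sub_nhdsGT_atBot (by simpa using hg.sub_const _) (neg_lt_zero.mpr hεε)
end
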